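/- Let X, Y be binary symmetric with P(X=Y=0)=P(X=Y=1)=(1−δ)/2 and P(X=0,Y=1)=P(X=1,Y=0)=δ/2 for 0<δ<1/2. For any random variables U₁,...,U_r satisfying the interactive Markov conditions (P1)-(P2), we have I(X, Y ∧ U^r) ≥ min{H(X), H(Y)} = 1. -/

import Mathlib

/-!
Each message is sent by one party and, given that party's input and the transcript so far, is
independent of the other input. Hence, on the event that the transcript equals `u`, the law of
`(X, Y)` has the form `f(x) g(y) P(x, y)` (the rectangle property). The Markov chain
`X - U^r - Y` makes this conditional law a rank-one `2 × 2` matrix; since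
`P(0,0) P(1,1) ≠ P(0,1) P(1,0)` for `δ ≠ 1/2`, one entry of each diagonal must vanish. So
`(X, Y, U^r)` is recovered from `(X + Y mod 2, U^r)`, and
`I(X, Y ∧ U^r) = H(X, Y) + H(U^r) - H(X + Y, U^r) ≥ H(X, Y) - H(X + Y) = 1`.
-/

open scoped Classical
open Finset Real

noncomputable section

variable {Ω : Type*} [Fintype Ω]

/-- Pushforward probability of value `x` under random variable `X` w.r.t. pmf `p`. -/
def dist' {α : Type*} (p : Ω → ℝ) (X : Ω → α) (x : α) : ℝ :=
  ∑ ω, if X ω = x then p ω else 0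

/-- Shannon entropy, base 2. -/
def ent {α : Type*} [Fintype α] (p : Ω → ℝ) (X : Ω → α) : ℝ :=
  -∑ x, dist' p X x * Real.logb 2 (dist' p X x)

/-- Conditional entropy `H(X | Y)`. -/
def condEnt {α β : Type*} [Fintype α] [Fintype β] (p : Ω → ℝ) (X : Ω → α) (Y : Ω → β) : ℝ :=
  ent p (fun ω => (X ω, Y ω)) - ent p Y

/-- Mutual information `I(X ∧ Y)`. -/
def mi {α β : Type*} [Fintype α] [Fintype β] (p : Ω → ℝ) (X : Ω → α) (Y : Ω → β) : ℝ :=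
  ent p X + ent p Y - ent p (fun ω => (X ω, Y ω))

/-- Conditional mutual information `I(X ∧ Y | Z)`. -/
def cmi {α β γ : Type*} [Fintype α] [Fintype β] [Fintype γ]
    (p : Ω → ℝ) (X : Ω → α) (Y : Ω → β) (Z : Ω → γ) : ℝ :=
  ent p (fun ω => (X ω, Z ω)) + ent p (fun ω => (Y ω, Z ω))
    - ent p (fun ω => ((X ω, Y ω), Z ω)) - ent p Z

/-- `p` is a probability mass function on `Ω`. -/
def IsPMF (p : Ω → ℝ) : Prop := (∀ ω, 0 ≤ p ω) ∧ ∑ ω, p ω = 1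

/-- The prefix `U^i = (U_1, ..., U_i)` of an interactive sequence. -/
def pre {𝒰 : Type*} {r : ℕ} (U : Fin r → Ω → 𝒰) (i : ℕ) (h : i ≤ r) :
    Ω → (Fin i → 𝒰) :=
  fun ω k => U (Fin.castLE h k) ω

/-- Condition (P1): interactive Markov conditions.  Index `j : Fin r` corresponds to the
`(j+1)`-st message; messages with odd 1-based index (`Even j.val`) are sent by terminal 𝒳. -/
def P1cond {𝒳 𝒴 𝒰 : Type*} [Fintype 𝒳] [Fintype 𝒴] [Fintype 𝒰] {r : ℕ}
    (p : Ω → ℝ) (X : Ω → 𝒳) (Y : Ω → 𝒴) (U : Fin r → Ω → 𝒰) : Prop :=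
  ∀ j : Fin r,
    (Even j.val → cmi p (U j) Y (fun ω => (X ω, pre U j.val j.isLt.le ω)) = 0) ∧
    (¬ Even j.val → cmi p (U j) X (fun ω => (Y ω, pre U j.val j.isLt.le ω)) = 0)

/-- Condition (P2): `X -∘- U^r -∘- Y`. -/
def P2cond {𝒳 𝒴 𝒰 : Type*} [Fintype 𝒳] [Fintype 𝒴] [Fintype 𝒰] {r : ℕ}
    (p : Ω → ℝ) (X : Ω → 𝒳) (Y : Ω → 𝒴) (U : Fin r → Ω → 𝒰) : Prop :=
  cmi p X Y (pre U r le_rfl) = 0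

section Distribution

variable {α β : Type*} (p : Ω → ℝ)

lemma dist'_nonneg (hp : ∀ ω, 0 ≤ p ω) (Z : Ω → α) (a : α) : 0 ≤ dist' p Z a :=
  sum_nonneg fun ω _ => by split_ifs <;> simp [hp ω]

lemma dist'_congr {Z : Ω → α} {W : Ω → β} {a : α} {b : β} (h : ∀ ω, Z ω = a ↔ W ω = b) :
    dist' p Z a = dist' p W b :=
  sum_congr rfl fun ω _ => if_congr (h ω) rfl rfl

lemma dist'_mono (hp : ∀ ω, 0 ≤ p ω) {Z : Ω → α} {W : Ω → β} {a : α} {b : β}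
    (h : ∀ ω, Z ω = a → W ω = b) : dist' p Z a ≤ dist' p W b :=
  sum_le_sum fun ω _ => by
    by_cases hZ : Z ω = a
    · simp [hZ, h ω hZ]
    · simp only [hZ, if_false]; split_ifs <;> simp [hp ω]

lemma dist'_eq_zero_of_imp (hp : ∀ ω, 0 ≤ p ω) {Z : Ω → α} {W : Ω → β} {a : α} {b : β}
    (h : ∀ ω, Z ω = a → W ω = b) (hW : dist' p W b = 0) : dist' p Z a = 0 :=
  le_antisymm (hW ▸ dist'_mono p hp h) (dist'_nonneg p hp Z a)

lemma dist'_eq_zero_of_forall_ne {Z : Ω → α} {a : α} (h : ∀ ω, Z ω ≠ a) : dist' p Z a = 0 :=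
  sum_eq_zero fun ω _ => if_neg (h ω)

lemma sum_dist' [Fintype α] (Z : Ω → α) : ∑ a, dist' p Z a = ∑ ω, p ω := by
  unfold dist'
  rw [sum_comm]
  simp

lemma dist'_comp [Fintype α] [DecidableEq β] (Z : Ω → α) (f : α → β) (b : β) :
    dist' p (fun ω => f (Z ω)) b = ∑ a with f a = b, dist' p Z a := by
  unfold dist'
  rw [sum_comm]
  refine sum_congr rfl fun ω _ => ?_
  by_cases h : f (Z ω) = b <;> simp [h]

lemma sum_dist'_pair_right [Fintype β] (Z : Ω → α) (W : Ω → β) (a : α) :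
    ∑ b, dist' p (fun ω => (Z ω, W ω)) (a, b) = dist' p Z a := by
  unfold dist'
  rw [sum_comm]
  refine sum_congr rfl fun ω _ => ?_
  by_cases h : Z ω = a <;> simp [h]

lemma sum_dist'_pair_left [Fintype α] (Z : Ω → α) (W : Ω → β) (b : β) :
    ∑ a, dist' p (fun ω => (Z ω, W ω)) (a, b) = dist' p W b := by
  unfold dist'
  rw [sum_comm]
  refine sum_congr rfl fun ω _ => ?_
  by_cases h : W ω = b <;> simp [h]

end Distribution

section Gibbs

lemma sub_le_mul_log_sub_log {a q : ℝ} (ha : 0 ≤ a) (hq : 0 ≤ q) (hsupp : q = 0 → a = 0) :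
    a - q ≤ a * (log a - log q) := by
  rcases ha.eq_or_lt with rfl | ha
  · simpa using hq
  have hq : 0 < q := hq.lt_of_ne fun h => ha.ne' (hsupp h.symm)
  have key := mul_le_mul_of_nonneg_left (self_sub_one_le_mul_log (div_nonneg ha.le hq.le)) hq.le
  rw [log_div ha.ne' hq.ne'] at key
  field_simp at key
  linarith

lemma eq_of_mul_log_sub_log_le {a q : ℝ} (ha : 0 ≤ a) (hq : 0 ≤ q) (hsupp : q = 0 → a = 0)
    (h : a * (log a - log q) ≤ a - q) : a = q := by
  rcases ha.eq_or_lt with rfl | ha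
  · linarith [show q ≤ 0 by simpa using h]
  have hq : 0 < q := hq.lt_of_ne fun h => ha.ne' (hsupp h.symm)
  by_contra hne
  have key := mul_lt_mul_of_pos_left
    (self_sub_one_lt_mul_log (div_nonneg ha.le hq.le) (by rwa [ne_eq, div_eq_one_iff_eq hq.ne']))
    hq
  rw [log_div ha.ne' hq.ne'] at key
  field_simp at key
  linarith

variable {ι : Type*} [Fintype ι] {a q : ι → ℝ}

lemma sum_sub_sum_le_sum_mul_log_sub_log (ha : ∀ i, 0 ≤ a i) (hq : ∀ i, 0 ≤ q i)
    (hsupp : ∀ i, q i = 0 → a i = 0) :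
    ∑ i, a i - ∑ i, q i ≤ ∑ i, a i * (log (a i) - log (q i)) := by
  rw [← sum_sub_distrib]
  exact sum_le_sum fun i _ => sub_le_mul_log_sub_log (ha i) (hq i) (hsupp i)

lemma eq_of_sum_mul_log_sub_log_le (ha : ∀ i, 0 ≤ a i) (hq : ∀ i, 0 ≤ q i)
    (hsupp : ∀ i, q i = 0 → a i = 0)
    (h : ∑ i, a i * (log (a i) - log (q i)) ≤ ∑ i, a i - ∑ i, q i) : a = q := by
  have hgap : ∀ i ∈ univ, 0 ≤ a i * (log (a i) - log (q i)) - (a i - q i) := fun i _ =>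
    sub_nonneg.2 (sub_le_mul_log_sub_log (ha i) (hq i) (hsupp i))
  have hsum : ∑ i, (a i * (log (a i) - log (q i)) - (a i - q i)) = 0 := by
    refine le_antisymm ?_ (sum_nonneg hgap)
    rw [sum_sub_distrib, sum_sub_distrib]
    linarith
  funext i
  exact eq_of_mul_log_sub_log_le (ha i) (hq i) (hsupp i)
    (sub_nonpos.1 ((sum_eq_zero_iff_of_nonneg hgap).1 hsum i (mem_univ i)).le)

end Gibbs

section Entropy

lemma apply_sum_eq_sum_apply_of_subsingleton_support {ι : Type*} {s : Finset ι} {d : ι → ℝ}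
    {φ : ℝ → ℝ} (hφ : φ 0 = 0) (hs : ∀ a ∈ s, ∀ a' ∈ s, d a ≠ 0 → d a' ≠ 0 → a = a') :
    φ (∑ a ∈ s, d a) = ∑ a ∈ s, φ (d a) := by
  by_cases h : ∃ a ∈ s, d a ≠ 0
  · obtain ⟨a, ha, hda⟩ := h
    have hzero : ∀ a' ∈ s, a' ≠ a → d a' = 0 := fun a' ha' hne => by
      by_contra hda'
      exact hne (hs a' ha' a ha hda' hda)
    rw [sum_eq_single_of_mem a ha hzero,
      sum_eq_single_of_mem a ha fun a' ha' hne => by rw [hzero a' ha' hne, hφ]]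
  · simp only [not_exists, not_and, not_not] at h
    rw [sum_eq_zero h, hφ, sum_eq_zero fun a ha => by rw [h a ha, hφ]]

variable {α β : Type*} [Fintype α] [Fintype β] (p : Ω → ℝ)

lemma ent_comp (Z : Ω → α) (f : α → β) :
    ent p (fun ω => f (Z ω))
      = -∑ a, dist' p Z a * logb 2 (dist' p (fun ω => f (Z ω)) (f a)) := by
  rw [ent, ← sum_fiberwise univ f]
  congr 1
  refine sum_congr rfl fun b _ => ?_
  nth_rw 1 [dist'_comp p Z f b]
  rw [sum_mul]
  exact sum_congr rfl fun a ha => by rw [(mem_filter.1 ha).2]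

lemma ent_comp_of_injOn (Z : Ω → α) {f : α → β} (hf : Set.InjOn f {a | dist' p Z a ≠ 0}) :
    ent p (fun ω => f (Z ω)) = ent p Z := by
  rw [ent, ent, ← sum_fiberwise univ f]
  congr 1
  refine sum_congr rfl fun b _ => ?_
  rw [dist'_comp]
  refine apply_sum_eq_sum_apply_of_subsingleton_support (φ := fun x => x * logb 2 x) (by simp)
    fun a ha a' ha' hda hda' => hf hda hda' ?_
  rw [(mem_filter.1 ha).2, (mem_filter.1 ha').2]

lemma ent_eq_sum_negMulLog (Z : Ω → α) :
    ent p Z = (∑ a, negMulLog (dist' p Z a)) / log 2 := by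
  simp only [ent, negMulLog, logb, sum_div, ← sum_neg_distrib]
  exact sum_congr rfl fun a _ => by ring

lemma neg_sum_mul_logb_sub_ent (Z : Ω → α) (q : α → ℝ) :
    -∑ a, dist' p Z a * logb 2 (q a) - ent p Z
      = (∑ a, dist' p Z a * (log (dist' p Z a) - log (q a))) / log 2 := by
  simp only [ent, logb, mul_div_assoc', ← sum_div, mul_sub, sum_sub_distrib]
  ring

lemma ent_le_neg_sum_mul_logb (hp : IsPMF p) (Z : Ω → α) {q : α → ℝ} (hq : ∀ a, 0 ≤ q a)
    (hq1 : ∑ a, q a ≤ 1) (hsupp : ∀ a, q a = 0 → dist' p Z a = 0) :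
    ent p Z ≤ -∑ a, dist' p Z a * logb 2 (q a) := by
  have hgibbs := sum_sub_sum_le_sum_mul_log_sub_log (dist'_nonneg p hp.1 Z) hq hsupp
  rw [sum_dist', hp.2] at hgibbs
  have := div_nonneg (hgibbs.trans' (by linarith)) (log_pos one_lt_two).le
  rw [← neg_sum_mul_logb_sub_ent] at this
  linarith

lemma dist'_eq_of_neg_sum_mul_logb_le_ent (hp : IsPMF p) (Z : Ω → α) {q : α → ℝ}
    (hq : ∀ a, 0 ≤ q a) (hq1 : ∑ a, q a = 1) (hsupp : ∀ a, q a = 0 → dist' p Z a = 0)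
    (h : -∑ a, dist' p Z a * logb 2 (q a) ≤ ent p Z) : dist' p Z = q := by
  refine eq_of_sum_mul_log_sub_log_le (dist'_nonneg p hp.1 Z) hq hsupp ?_
  rw [sum_dist', hp.2, hq1, sub_self]
  have := sub_nonpos.2 h
  rw [neg_sum_mul_logb_sub_ent, div_nonpos_iff] at this
  rcases this with ⟨-, h2⟩ | ⟨h1, -⟩
  · linarith [log_pos one_lt_two]
  · exact h1

end Entropy

section MutualInformation

lemma mul_logb_mul_of_ne {b t x y : ℝ} (hx : t ≠ 0 → x ≠ 0) (hy : t ≠ 0 → y ≠ 0) :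
    t * logb b (x * y) = t * logb b x + t * logb b y := by
  by_cases ht : t = 0
  · simp [ht]
  · rw [logb_mul (hx ht) (hy ht), mul_add]

lemma mul_logb_div_of_ne {b t x y : ℝ} (hx : t ≠ 0 → x ≠ 0) (hy : t ≠ 0 → y ≠ 0) :
    t * logb b (x / y) = t * logb b x - t * logb b y := by
  by_cases ht : t = 0
  · simp [ht]
  · rw [logb_div (hx ht) (hy ht), mul_sub]

variable {α β γ : Type*} [Fintype α] [Fintype β] [Fintype γ] {p : Ω → ℝ}

theorem mi_nonneg (hp : IsPMF p) (A : Ω → α) (B : Ω → β) : 0 ≤ mi p A B := by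
  set AB : Ω → α × β := fun ω => (A ω, B ω)
  have hA (t : α × β) : dist' p A t.1 = 0 → dist' p AB t = 0 :=
    dist'_eq_zero_of_imp p hp.1 fun ω h => by simp [AB, ← h]
  have hB (t : α × β) : dist' p B t.2 = 0 → dist' p AB t = 0 :=
    dist'_eq_zero_of_imp p hp.1 fun ω h => by simp [AB, ← h]
  have hcross := ent_le_neg_sum_mul_logb p hp AB (q := fun t => dist' p A t.1 * dist' p B t.2)
    (fun t => mul_nonneg (dist'_nonneg p hp.1 _ _) (dist'_nonneg p hp.1 _ _))
    (by rw [Fintype.sum_prod_type, ← sum_mul_sum, sum_dist', sum_dist', hp.2, one_mul])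
    fun t ht => (mul_eq_zero.1 ht).elim (hA t) (hB t)
  have hsplit :
      -∑ t, dist' p AB t * logb 2 (dist' p A t.1 * dist' p B t.2) = ent p A + ent p B := by
    rw [ent_comp p AB Prod.fst, ent_comp p AB Prod.snd, ← neg_add, ← sum_add_distrib]
    exact congrArg _ (sum_congr rfl fun t _ => mul_logb_mul_of_ne (mt (hA t)) (mt (hB t)))
  unfold mi
  linarith

theorem dist'_mul_dist'_eq_of_cmi_eq_zero (hp : IsPMF p) {A : Ω → α} {B : Ω → β} {C : Ω → γ}
    (h : cmi p A B C = 0) (a : α) (b : β) (c : γ) :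
    dist' p (fun ω => ((A ω, B ω), C ω)) ((a, b), c) * dist' p C c
      = dist' p (fun ω => (A ω, C ω)) (a, c) * dist' p (fun ω => (B ω, C ω)) (b, c) := by
  let T : Ω → (α × β) × γ := fun ω => ((A ω, B ω), C ω)
  let dAC := dist' p (fun ω => (A ω, C ω))
  let dBC := dist' p (fun ω => (B ω, C ω))
  let q : (α × β) × γ → ℝ := fun t => dAC (t.1.1, t.2) * dBC (t.1.2, t.2) / dist' p C t.2
  have hAC (t : (α × β) × γ) : dAC (t.1.1, t.2) = 0 → dist' p T t = 0 :=
    dist'_eq_zero_of_imp p hp.1 fun ω h => by simp [T, ← h]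
  have hBC (t : (α × β) × γ) : dBC (t.1.2, t.2) = 0 → dist' p T t = 0 :=
    dist'_eq_zero_of_imp p hp.1 fun ω h => by simp [T, ← h]
  have hC (t : (α × β) × γ) : dist' p C t.2 = 0 → dist' p T t = 0 :=
    dist'_eq_zero_of_imp p hp.1 fun ω h => by simp [T, ← h]
  have hq1 : ∑ t, q t = 1 := by
    rw [Fintype.sum_prod_type_right, ← hp.2, ← sum_dist' p C]
    refine sum_congr rfl fun c _ => ?_
    simp only [q, dAC, dBC, Fintype.sum_prod_type, ← sum_div, ← sum_mul_sum]
    rw [sum_dist'_pair_left, sum_dist'_pair_left, mul_self_div_self]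
  have hsupp (t : (α × β) × γ) (ht : q t = 0) : dist' p T t = 0 := by
    rcases div_eq_zero_iff.1 ht with ht | ht
    · exact (mul_eq_zero.1 ht).elim (hAC t) (hBC t)
    · exact hC t ht
  have hcross : -∑ t, dist' p T t * logb 2 (q t)
      = ent p (fun ω => (A ω, C ω)) + ent p (fun ω => (B ω, C ω)) - ent p C := by
    rw [ent_comp p T (fun t => (t.1.1, t.2)), ent_comp p T (fun t => (t.1.2, t.2)),
      ent_comp p T Prod.snd]
    simp only [← sum_neg_distrib, ← sum_add_distrib, ← sum_sub_distrib]
    refine sum_congr rfl fun t _ => ?_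
    rw [mul_logb_div_of_ne (fun ht => mul_ne_zero (mt (hAC t) ht) (mt (hBC t) ht)) (mt (hC t)),
      mul_logb_mul_of_ne (mt (hAC t)) (mt (hBC t))]
    ring
  have hTq := congrFun (dist'_eq_of_neg_sum_mul_logb_le_ent p hp T
    (fun t => div_nonneg (mul_nonneg (dist'_nonneg p hp.1 _ _) (dist'_nonneg p hp.1 _ _))
      (dist'_nonneg p hp.1 _ _)) hq1 hsupp (by unfold cmi at h; linarith)) ((a, b), c)
  by_cases hc : dist' p C c = 0
  · have hac : dist' p (fun ω => (A ω, C ω)) (a, c) = 0 :=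
      dist'_eq_zero_of_imp p hp.1 (fun ω h => congrArg Prod.snd h) hc
    rw [hc, mul_zero, hac, zero_mul]
  · rw [hTq, div_mul_cancel₀ _ hc]

theorem cross_mul_eq_of_cmi_eq_zero (hp : IsPMF p) {X : Ω → α} {Y : Ω → β} {C : Ω → γ} (h : cmi p X Y C = 0) (c : γ) (x x' : α) (y y' : β) :
    let J := fun x y => dist' p (fun ω => ((X ω, Y ω), C ω)) ((x, y), c)
    J x y * J x' y' = J x y' * J x' y := by
  intro J
  by_cases hc : dist' p C c = 0
  · have hJ (x : α) (y : β) : J x y = 0 :=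
      dist'_eq_zero_of_imp p hp.1 (fun ω hω => congrArg Prod.snd hω) hc
    simp [hJ]
  · have hf := dist'_mul_dist'_eq_of_cmi_eq_zero hp h (c := c)
    refine mul_right_cancel₀ (mul_ne_zero hc hc) ?_
    linear_combination (J x' y' * dist' p C c) * hf x y
      + (dist' p (fun ω => (X ω, C ω)) (x, c) * dist' p (fun ω => (Y ω, C ω)) (y, c)) * hf x' y'
      - (J x' y * dist' p C c) * hf x y'
      - (dist' p (fun ω => (X ω, C ω)) (x, c) * dist' p (fun ω => (Y ω, C ω)) (y', c)) * hf x' y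

end MutualInformation

section Rectangle

lemma eq_div_mul_of_mul_sum_eq {β : Type*} [Fintype β] {J J' : β → ℝ} (h0 : ∀ y, 0 ≤ J' y)
    (hle : ∀ y, J' y ≤ J y) (h : ∀ y, J' y * ∑ y', J y' = (∑ y', J' y') * J y) (y : β) :
    J' y = (∑ y', J' y') / (∑ y', J y') * J y := by
  by_cases hR : ∑ y', J y' = 0
  · have hJ : J y = 0 :=
      (sum_eq_zero_iff_of_nonneg fun y' _ => (h0 y').trans (hle y')).1 hR y (mem_univ y)
    rw [hR, div_zero, zero_mul]
    exact le_antisymm (hJ ▸ hle y) (h0 y)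
  · rw [div_mul_eq_mul_div, eq_div_iff hR, h]

variable {α β γ γ' 𝒱 : Type*} {p : Ω → ℝ}

def RectangleProperty (p : Ω → ℝ) (X : Ω → α) (Y : Ω → β) (C : Ω → γ) : Prop :=
  ∀ c, ∃ f : α → ℝ, ∃ g : β → ℝ, ∀ x y,
    dist' p (fun ω => ((X ω, Y ω), C ω)) ((x, y), c)
      = f x * g y * dist' p (fun ω => (X ω, Y ω)) (x, y)

lemma mul_eq_zero_of_rectangle {J P : α → β → ℝ} {f : α → ℝ} {g : β → ℝ} {x x' : α} {y y' : β}
    (hJ : ∀ x y, J x y = f x * g y * P x y) (hcross : J x y * J x' y' = J x y' * J x' y)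
    (hP : P x y * P x' y' ≠ P x y' * P x' y) : J x y * J x' y' = 0 := by
  simp only [hJ] at hcross ⊢
  have hfg : f x * f x' * g y * g y' * (P x y * P x' y' - P x y' * P x' y) = 0 := by
    linear_combination hcross
  rcases mul_eq_zero.1 hfg with h | h
  · linear_combination P x y * P x' y' * h
  · exact absurd (sub_eq_zero.1 h) hP

namespace RectangleProperty

variable {X : Ω → α} {Y : Ω → β} {C : Ω → γ}

lemma of_subsingleton [Subsingleton γ] (X : Ω → α) (Y : Ω → β) (C : Ω → γ) :
    RectangleProperty p X Y C := fun c =>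
  ⟨1, 1, fun x y => by
    rw [Pi.one_apply, Pi.one_apply, one_mul, one_mul]
    exact dist'_congr p fun ω => by simp [Subsingleton.elim (C ω) c]⟩

lemma swap (h : RectangleProperty p X Y C) : RectangleProperty p Y X C := fun c => by
  obtain ⟨f, g, hfg⟩ := h c
  refine ⟨g, f, fun y x => ?_⟩
  have hjoint : dist' p (fun ω => ((Y ω, X ω), C ω)) ((y, x), c)
      = dist' p (fun ω => ((X ω, Y ω), C ω)) ((x, y), c) :=
    dist'_congr p fun ω => by simp only [Prod.mk.injEq]; tauto
  have hpair : dist' p (fun ω => (Y ω, X ω)) (y, x) = dist' p (fun ω => (X ω, Y ω)) (x, y) :=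
    dist'_congr p fun ω => by simp only [Prod.mk.injEq]; tauto
  rw [hjoint, hpair, hfg]
  ring

lemma comp_injective (h : RectangleProperty p X Y C) {e : γ → γ'} (he : e.Injective) :
    RectangleProperty p X Y (fun ω => e (C ω)) := fun c' => by
  by_cases hc' : ∃ c, e c = c'
  · obtain ⟨c, rfl⟩ := hc'
    obtain ⟨f, g, hfg⟩ := h c
    exact ⟨f, g, fun x y => by rw [← hfg]; exact dist'_congr p fun ω => by simp [he.eq_iff]⟩
  · refine ⟨0, 0, fun x y => ?_⟩
    rw [Pi.zero_apply, zero_mul, zero_mul]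
    exact dist'_eq_zero_of_forall_ne p fun ω hω => hc' ⟨C ω, congrArg Prod.snd hω⟩

/-- Given `(X, C)`, the message `V` is independent of `Y`, so conditioning on it only rescales
the row weights `f`. -/
lemma pair_of_cmi_eq_zero [Fintype α] [Fintype β] [Fintype γ] [Fintype 𝒱] (hp : IsPMF p)
    (h : RectangleProperty p X Y C) {V : Ω → 𝒱} (hV : cmi p V Y (fun ω => (X ω, C ω)) = 0) :
    RectangleProperty p X Y (fun ω => (C ω, V ω)) := by
  rintro ⟨c, v⟩
  obtain ⟨f, g, hfg⟩ := h c
  let J (x : α) (y : β) := dist' p (fun ω => ((X ω, Y ω), C ω)) ((x, y), c)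
  let J' (x : α) (y : β) := dist' p (fun ω => ((X ω, Y ω), (C ω, V ω))) ((x, y), (c, v))
  have hscale (x : α) (y : β) : J' x y * ∑ y', J x y' = (∑ y', J' x y') * J x y := by
    have hfac := dist'_mul_dist'_eq_of_cmi_eq_zero hp hV v y (x, c)
    have e1 : dist' p (fun ω => ((V ω, Y ω), (X ω, C ω))) ((v, y), (x, c)) = J' x y :=
      dist'_congr p fun ω => by simp only [Prod.mk.injEq]; tauto
    have e2 : dist' p (fun ω => (X ω, C ω)) (x, c) = ∑ y', J x y' := by
      rw [← sum_dist'_pair_right p _ Y]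
      exact sum_congr rfl fun y' _ => dist'_congr p fun ω => by simp only [Prod.mk.injEq]; tauto
    have e3 : dist' p (fun ω => (V ω, (X ω, C ω))) (v, (x, c)) = ∑ y', J' x y' := by
      rw [← sum_dist'_pair_right p _ Y]
      exact sum_congr rfl fun y' _ => dist'_congr p fun ω => by simp only [Prod.mk.injEq]; tauto
    have e4 : dist' p (fun ω => (Y ω, (X ω, C ω))) (y, (x, c)) = J x y :=
      dist'_congr p fun ω => by simp only [Prod.mk.injEq]; tauto
    rwa [e1, e2, e3, e4] at hfac
  refine ⟨fun x => (∑ y', J' x y') / (∑ y', J x y') * f x, g, fun x y => ?_⟩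
  have hrow := eq_div_mul_of_mul_sum_eq (fun y => dist'_nonneg p hp.1 _ _)
    (fun y => dist'_mono p hp.1 fun ω hω => by simp_all) (hscale x) y
  rw [hrow, hfg]
  ring

end RectangleProperty

end Rectangle

section Transcript

variable {𝒰 : Type*} {r : ℕ}

lemma pre_succ {Ω : Type*} (U : Fin r → Ω → 𝒰) {i : ℕ} (hi : i + 1 ≤ r) :
    pre U (i + 1) hi
      = fun ω => Fin.snoc (α := fun _ => 𝒰) (pre U i (Nat.le_of_succ_le hi) ω) (U ⟨i, hi⟩ ω) := by
  funext ω k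
  induction k using Fin.lastCases with
  | last => simp only [pre, Fin.snoc_last]; rfl
  | cast k => simp [pre]

theorem rectangleProperty_pre {𝒳 𝒴 : Type*} [Fintype 𝒳] [Fintype 𝒴] [Fintype 𝒰] {p : Ω → ℝ}
    (hp : IsPMF p) {X : Ω → 𝒳} {Y : Ω → 𝒴} {U : Fin r → Ω → 𝒰} (h1 : P1cond p X Y U) :
    ∀ i (hi : i ≤ r), RectangleProperty p X Y (pre U i hi)
  | 0, _ => .of_subsingleton X Y _
  | i + 1, hi => by
    have ih := rectangleProperty_pre hp h1 i (Nat.le_of_succ_le hi)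
    have hstep :
        RectangleProperty p X Y (fun ω => (pre U i (Nat.le_of_succ_le hi) ω, U ⟨i, hi⟩ ω)) := by
      by_cases hev : Even i
      · exact ih.pair_of_cmi_eq_zero hp ((h1 ⟨i, hi⟩).1 hev)
      · exact (ih.swap.pair_of_cmi_eq_zero hp ((h1 ⟨i, hi⟩).2 hev)).swap
    rw [pre_succ]
    exact hstep.comp_injective (Fin.snoc_injective2 (α := fun _ => 𝒰)).uncurry

end Transcript

section BinarySymmetric

variable {p : Ω → ℝ}

lemma negMulLog_half (t : ℝ) : negMulLog (t / 2) = (negMulLog t + t * log 2) / 2 := by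
  rw [div_eq_mul_inv, negMulLog_mul]
  simp only [negMulLog, log_inv]
  ring

lemma ent_eq_one_of_uniform (Z : Ω → Fin 2) (h : ∀ x, dist' p Z x = 1 / 2) : ent p Z = 1 := by
  have hlog : log 2 ≠ 0 := (log_pos one_lt_two).ne'
  rw [ent_eq_sum_negMulLog, Fin.sum_univ_two, h, h, negMulLog_half, negMulLog_one]
  field_simp
  ring

lemma ent_pair_eq_ent_add_add_one {X Y : Ω → Fin 2} {δ : ℝ}
    (h00 : dist' p (fun ω => (X ω, Y ω)) (0, 0) = (1 - δ) / 2)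
    (h11 : dist' p (fun ω => (X ω, Y ω)) (1, 1) = (1 - δ) / 2)
    (h01 : dist' p (fun ω => (X ω, Y ω)) (0, 1) = δ / 2)
    (h10 : dist' p (fun ω => (X ω, Y ω)) (1, 0) = δ / 2) :
    ent p (fun ω => (X ω, Y ω)) = ent p (fun ω => X ω + Y ω) + 1 := by
  have hW (w : Fin 2) : dist' p (fun ω => X ω + Y ω) w
      = ∑ t with t.1 + t.2 = w, dist' p (fun ω => (X ω, Y ω)) t :=
    dist'_comp p (fun ω => (X ω, Y ω)) (fun t => t.1 + t.2) w
  have hW0 : dist' p (fun ω => X ω + Y ω) 0 = 1 - δ := by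
    simp [hW, sum_filter, Fintype.sum_prod_type, h00, h11]
  have hW1 : dist' p (fun ω => X ω + Y ω) 1 = δ := by
    simp [hW, sum_filter, Fintype.sum_prod_type, h01, h10]
  have hlog : log 2 ≠ 0 := (log_pos one_lt_two).ne'
  rw [ent_eq_sum_negMulLog, ent_eq_sum_negMulLog, Fin.sum_univ_two, hW0, hW1,
    Fintype.sum_prod_type, Fin.sum_univ_two, Fin.sum_univ_two, Fin.sum_univ_two, h00, h01, h10,
    h11, negMulLog_half, negMulLog_half]
  field_simp
  ring

lemma injOn_add_of_mul_eq_zero {γ : Type*} {d : (Fin 2 × Fin 2) × γ → ℝ}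
    (h : ∀ u, d ((0, 0), u) * d ((1, 1), u) = 0 ∧ d ((0, 1), u) * d ((1, 0), u) = 0) :
    Set.InjOn (fun t => (t.1.1 + t.1.2, t.2)) {t | d t ≠ 0} := by
  rintro ⟨⟨x, y⟩, u⟩ ht ⟨⟨x', y'⟩, u'⟩ ht' heq
  simp only [Prod.mk.injEq] at heq
  obtain ⟨hsum, rfl⟩ := heq
  have := h u
  clear h
  fin_cases x <;> fin_cases y <;> fin_cases x' <;> fin_cases y' <;> simp_all

lemma min_ent_eq_one {X Y : Ω → Fin 2} {δ : ℝ}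
    (h00 : dist' p (fun ω => (X ω, Y ω)) (0, 0) = (1 - δ) / 2)
    (h11 : dist' p (fun ω => (X ω, Y ω)) (1, 1) = (1 - δ) / 2)
    (h01 : dist' p (fun ω => (X ω, Y ω)) (0, 1) = δ / 2)
    (h10 : dist' p (fun ω => (X ω, Y ω)) (1, 0) = δ / 2) :
    min (ent p X) (ent p Y) = 1 := by
  have hX : ent p X = 1 := ent_eq_one_of_uniform X <| Fin.forall_fin_two.2
    ⟨by rw [← sum_dist'_pair_right p X Y, Fin.sum_univ_two, h00, h01]; ring,
      by rw [← sum_dist'_pair_right p X Y, Fin.sum_univ_two, h10, h11]; ring⟩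
  have hY : ent p Y = 1 := ent_eq_one_of_uniform Y <| Fin.forall_fin_two.2
    ⟨by rw [← sum_dist'_pair_left p X Y, Fin.sum_univ_two, h00, h10]; ring,
      by rw [← sum_dist'_pair_left p X Y, Fin.sum_univ_two, h01, h11]; ring⟩
  rw [hX, hY, min_self]

theorem mul_eq_zero_of_P1cond_of_P2cond {𝒰 : Type*} [Fintype 𝒰] {r : ℕ} (hp : IsPMF p)
    {X Y : Ω → Fin 2} {U : Fin r → Ω → 𝒰} (h1 : P1cond p X Y U) (h2 : P2cond p X Y U)
    (hP : dist' p (fun ω => (X ω, Y ω)) (0, 0) * dist' p (fun ω => (X ω, Y ω)) (1, 1)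
      ≠ dist' p (fun ω => (X ω, Y ω)) (0, 1) * dist' p (fun ω => (X ω, Y ω)) (1, 0))
    (u : Fin r → 𝒰) :
    let J := fun x y => dist' p (fun ω => ((X ω, Y ω), pre U r le_rfl ω)) ((x, y), u)
    J 0 0 * J 1 1 = 0 ∧ J 0 1 * J 1 0 = 0 := by
  obtain ⟨f, g, hfg⟩ := rectangleProperty_pre hp h1 r le_rfl u
  have hcross := cross_mul_eq_of_cmi_eq_zero hp h2 u 0 1 0 1
  have hzero := mul_eq_zero_of_rectangle hfg hcross hP
  exact ⟨hzero, hcross ▸ hzero⟩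

end BinarySymmetric

theorem stmt15_general {Ω 𝒰 : Type*} [Fintype Ω] [Fintype 𝒰] {r : ℕ}
    (p : Ω → ℝ) (hp : IsPMF p) (X : Ω → Fin 2) (Y : Ω → Fin 2) (δ : ℝ)
    (hδ1 : δ < 1/2)
    (h00 : dist' p (fun ω => (X ω, Y ω)) (0, 0) = (1 - δ) / 2)
    (h11 : dist' p (fun ω => (X ω, Y ω)) (1, 1) = (1 - δ) / 2)
    (h01 : dist' p (fun ω => (X ω, Y ω)) (0, 1) = δ / 2)
    (h10 : dist' p (fun ω => (X ω, Y ω)) (1, 0) = δ / 2)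
    (U : Fin r → Ω → 𝒰)
    (h1 : P1cond p X Y U) (h2 : P2cond p X Y U) :
    mi p (fun ω => (X ω, Y ω)) (pre U r le_rfl) ≥ min (ent p X) (ent p Y) ∧
    min (ent p X) (ent p Y) = 1 := by
  have hmin := min_ent_eq_one h00 h11 h01 h10
  have hP : dist' p (fun ω => (X ω, Y ω)) (0, 0) * dist' p (fun ω => (X ω, Y ω)) (1, 1)
      ≠ dist' p (fun ω => (X ω, Y ω)) (0, 1) * dist' p (fun ω => (X ω, Y ω)) (1, 0) := by
    rw [h00, h11, h01, h10]
    intro h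
    nlinarith
  have hjoint := ent_comp_of_injOn p (fun ω => ((X ω, Y ω), pre U r le_rfl ω))
    (injOn_add_of_mul_eq_zero (mul_eq_zero_of_P1cond_of_P2cond hp h1 h2 hP))
  have hsub := mi_nonneg hp (fun ω => X ω + Y ω) (pre U r le_rfl)
  have hXY := ent_pair_eq_ent_add_add_one h00 h11 h01 h10
  refine ⟨?_, hmin⟩
  rw [hmin]
  unfold mi at hsub ⊢
  linarith

/-- For binary symmetric sources with crossover `δ ∈ (0, 1/2)` and interactive `U^r`
satisfying (P1)-(P2), `I(X,Y ∧ U^r) ≥ min{H(X), H(Y)} = 1`. -/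
theorem stmt15 {Ω 𝒰 : Type*} [Fintype Ω] [Fintype 𝒰] {r : ℕ}
    (p : Ω → ℝ) (hp : IsPMF p) (X : Ω → Fin 2) (Y : Ω → Fin 2) (δ : ℝ)
    (hδ0 : 0 < δ) (hδ1 : δ < 1/2)
    (h00 : dist' p (fun ω => (X ω, Y ω)) (0, 0) = (1 - δ) / 2)
    (h11 : dist' p (fun ω => (X ω, Y ω)) (1, 1) = (1 - δ) / 2)
    (h01 : dist' p (fun ω => (X ω, Y ω)) (0, 1) = δ / 2)
    (h10 : dist' p (fun ω => (X ω, Y ω)) (1, 0) = δ / 2)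
    (U : Fin r → Ω → 𝒰)
    (h1 : P1cond p X Y U) (h2 : P2cond p X Y U) :
    mi p (fun ω => (X ω, Y ω)) (pre U r le_rfl) ≥ min (ent p X) (ent p Y) ∧
    min (ent p X) (ent p Y) = 1 :=
  stmt15_general p hp X Y δ hδ1 h00 h11 h01 h10 U h1 h2
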